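/- Let f : V → W be a linear map of finite-dimensional real vector spaces and L ⊆ W × W* a Lagrangian subspace. Then the pullback f*L := {(v, α∘f) ∈ V × V* : v ∈ V, α ∈ W*, (f(v), α) ∈ L} is a Lagrangian subspace of V × V*. (Linear-algebra form of the pullback of Dirac structures.) -/

import Mathlib

/-!
Isotropy of `f*L` is inherited from `L`. For the converse, let `(v, ξ)` be orthogonal to `f*L`.
Testing against `(u, 0)` with `u ∈ ker f` shows that `ξ` kills `ker f`, so `ξ = η ∘ f`. Then the
functional `(f v, η)` annihilates `L ∩ (im f × W*)`, and
`(L ∩ (im f × W*))^⊥ = L^⊥ + (im f × W*)^⊥ = L + (0 × (im f)°)`, so `(f v, η - γ) ∈ L` for some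
`γ ∈ (im f)°`; since `γ ∘ f = 0`, this exhibits `(v, ξ)` as an element of `f*L`.
-/

/-- A subspace `L ⊆ V × V*` is Lagrangian if it equals its orthogonal
complement with respect to the symmetric pairing
`⟨(v,α),(w,β)⟩ = α(w) + β(v)`. -/
def IsLagrangian {V : Type*} [AddCommGroup V] [Module ℝ V]
    (L : Submodule ℝ (V × Module.Dual ℝ V)) : Prop :=
  ∀ x : V × Module.Dual ℝ V, x ∈ L ↔ ∀ y ∈ L, x.2 y.1 + y.2 x.1 = 0

open Module Submodule

section Pairing

variable (W : Type*) [AddCommGroup W] [Module ℝ W]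

noncomputable def pairingEquiv [FiniteDimensional ℝ W] :
    (W × Dual ℝ W) ≃ₗ[ℝ] Dual ℝ (W × Dual ℝ W) :=
  (LinearEquiv.prodComm ℝ W (Dual ℝ W)).trans <|
    ((LinearEquiv.refl ℝ (Dual ℝ W)).prodCongr (evalEquiv ℝ W)).trans <|
      dualProdDualEquivDual ℝ W (Dual ℝ W)

variable {W} [FiniteDimensional ℝ W]

@[simp]
lemma pairingEquiv_apply (x y : W × Dual ℝ W) : pairingEquiv W x y = x.2 y.1 + y.2 x.1 :=
  rfl

lemma IsLagrangian.mem_iff_pairingEquiv_mem_dualAnnihilator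
    {L : Submodule ℝ (W × Dual ℝ W)} (hL : IsLagrangian L) (x : W × Dual ℝ W) :
    x ∈ L ↔ pairingEquiv W x ∈ L.dualAnnihilator := by
  simp only [hL x, mem_dualAnnihilator, pairingEquiv_apply]

lemma pairingEquiv_mem_dualAnnihilator_prod_top_iff (S : Submodule ℝ W) (x : W × Dual ℝ W) :
    pairingEquiv W x ∈ (S.prod ⊤).dualAnnihilator ↔ x.1 = 0 ∧ x.2 ∈ S.dualAnnihilator := by
  simp only [mem_dualAnnihilator, mem_prod, mem_top, and_true, Prod.forall, pairingEquiv_apply]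
  constructor
  · intro h
    refine ⟨(forall_dual_apply_eq_zero_iff ℝ x.1).mp fun β ↦ ?_, fun w hw ↦ ?_⟩
    · simpa using h 0 β S.zero_mem
    · simpa using h w 0 hw
  · rintro ⟨h₁, h₂⟩ w β hw
    simp [h₁, h₂ w hw]

lemma IsLagrangian.exists_sub_mem_of_orthogonal_inf_prod_top
    {L : Submodule ℝ (W × Dual ℝ W)} (hL : IsLagrangian L) (S : Submodule ℝ W)
    (w : W) (η : Dual ℝ W) (h : ∀ y ∈ L, y.1 ∈ S → η y.1 + y.2 w = 0) :
    ∃ γ ∈ S.dualAnnihilator, (w, η - γ) ∈ L := by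
  have hmem : pairingEquiv W (w, η) ∈ (L ⊓ S.prod ⊤).dualAnnihilator := by
    rw [mem_dualAnnihilator]
    rintro y ⟨hyL, hyS, -⟩
    exact h y hyL hyS
  rw [Subspace.dualAnnihilator_inf_eq, mem_sup] at hmem
  obtain ⟨φ, haL, ψ, hbS, hsum⟩ := hmem
  obtain ⟨a, rfl⟩ := (pairingEquiv W).surjective φ
  obtain ⟨b, rfl⟩ := (pairingEquiv W).surjective ψ
  rw [← hL.mem_iff_pairingEquiv_mem_dualAnnihilator] at haL
  obtain ⟨hb₁, hb₂⟩ := (pairingEquiv_mem_dualAnnihilator_prod_top_iff S b).mp hbS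
  have hab : (w, η) = a + b := (pairingEquiv W).injective (by rw [map_add, hsum])
  refine ⟨b.2, hb₂, ?_⟩
  have ha : a = (w, η) - b := eq_sub_of_add_eq hab.symm
  convert haL using 1
  ext <;> simp [ha, hb₁]

end Pairing

lemma IsLagrangian.exists_mem_of_orthogonal_pullback
    {V W : Type*} [AddCommGroup V] [Module ℝ V]
    [AddCommGroup W] [Module ℝ W] [FiniteDimensional ℝ W]
    {L : Submodule ℝ (W × Dual ℝ W)} (hL : IsLagrangian L) (f : V →ₗ[ℝ] W)
    (v : V) (ξ : Dual ℝ V) (h : ∀ u β, (f u, β) ∈ L → ξ u + β (f v) = 0) :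
    ∃ α : Dual ℝ W, (f v, α) ∈ L ∧ ξ = α ∘ₗ f := by
  have hker : ξ ∈ (LinearMap.ker f).dualAnnihilator := by
    rw [mem_dualAnnihilator]
    intro u hu
    simpa using h u 0 (by rw [LinearMap.mem_ker.mp hu, Prod.mk_zero_zero]; exact L.zero_mem)
  obtain ⟨η, rfl⟩ := (LinearMap.range_dualMap_eq_dualAnnihilator_ker f ▸ hker :)
  obtain ⟨γ, hγ, hmem⟩ := hL.exists_sub_mem_of_orthogonal_inf_prod_top (LinearMap.range f)
    (f v) η (by rintro ⟨_, β⟩ hy ⟨u, rfl⟩; exact h u β hy)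
  refine ⟨η - γ, hmem, LinearMap.ext fun u ↦ ?_⟩
  simp [(mem_dualAnnihilator γ).mp hγ _ (LinearMap.mem_range_self f u)]

theorem pullback_of_lagrangian_is_lagrangian
    {V W : Type*} [AddCommGroup V] [Module ℝ V]
    [AddCommGroup W] [Module ℝ W] [FiniteDimensional ℝ W]
    (f : V →ₗ[ℝ] W)
    (L : Submodule ℝ (W × Module.Dual ℝ W)) (hL : IsLagrangian L) :
    ∀ x : V × Module.Dual ℝ V,
      (∃ α : Module.Dual ℝ W, (f x.1, α) ∈ L ∧ x.2 = α ∘ₗ f) ↔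
      ∀ y : V × Module.Dual ℝ V,
        (∃ α : Module.Dual ℝ W, (f y.1, α) ∈ L ∧ y.2 = α ∘ₗ f) →
        x.2 y.1 + y.2 x.1 = 0 := by
  rintro ⟨v, ξ⟩
  constructor
  · rintro ⟨α, hα, rfl⟩ ⟨u, _⟩ ⟨β, hβ, rfl⟩
    exact (hL _).mp hα _ hβ
  · intro h
    exact hL.exists_mem_of_orthogonal_pullback f v ξ fun u β hβ ↦ h (u, β ∘ₗ f) ⟨β, hβ, rfl⟩
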